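/- arXiv:2212.02471 — 5 statements merged into one kernel-verified Lean document; each statement's English description precedes it below -/
import Mathlib

section
/- Let n ≥ 1 be an integer, let t_0, t_1, …, t_n be integers with 1 = t_0 < t_1 < ⋯ < t_n, and set δ = max_{1 ≤ s ≤ n} (t_s − t_0)/s. Then for all real numbers a_0 ≥ a_1 ≥ ⋯ ≥ a_{n−1} ≥ 1, we have a_0^{t_1 − t_0} · a_1^{t_2 − t_1} ⋯ a_{n−1}^{t_n − t_{n−1}} ≤ (a_0 · a_1 ⋯ a_{n−1})^δ. -/
/-!
Taking logarithms, the claim becomes `∑ (t_{i+1} - t_i) log a_i ≤ ∑ δ log a_i`. The weights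
`log a_i` are nonnegative and decreasing, and the partial sums of the exponents satisfy
`t_s - t_0 ≤ s δ` by the choice of `δ`, so the inequality follows by summation by parts.
-/

open Finset

theorem Finset.sum_mul_le_sum_mul_of_sum_range_le {R : Type*} [CommRing R] [LinearOrder R]
    [IsStrictOrderedRing R] {n : ℕ} {b u v : ℕ → R}
    (hb : ∀ i, i + 1 < n → b (i + 1) ≤ b i) (hb0 : ∀ i < n, 0 ≤ b i)
    (huv : ∀ s ≤ n, ∑ i ∈ range s, u i ≤ ∑ i ∈ range s, v i) :
    ∑ i ∈ range n, u i * b i ≤ ∑ i ∈ range n, v i * b i := by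
  rcases Nat.eq_zero_or_pos n with rfl | hn
  · simp
  have hG : ∀ s ≤ n, 0 ≤ ∑ i ∈ range s, (v i - u i) := fun s hs => by
    rw [sum_sub_distrib]; exact sub_nonneg.mpr (huv s hs)
  have hparts := sum_range_by_parts b (fun i => v i - u i) n
  simp only [smul_eq_mul] at hparts
  have hdiff : ∑ i ∈ range n, (v i * b i - u i * b i) = ∑ i ∈ range n, b i * (v i - u i) :=
    sum_congr rfl fun i _ => by ring
  rw [← sub_nonneg, ← sum_sub_distrib, hdiff, hparts, sub_nonneg]
  calc ∑ i ∈ range (n - 1), (b (i + 1) - b i) * ∑ j ∈ range (i + 1), (v j - u j)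
      ≤ 0 := sum_nonpos fun i hi => by
        have hi := mem_range.mp hi
        exact mul_nonpos_of_nonpos_of_nonneg (sub_nonpos.mpr (hb i (by omega))) (hG _ (by omega))
    _ ≤ b (n - 1) * ∑ i ∈ range n, (v i - u i) :=
        mul_nonneg (hb0 _ (by omega)) (hG n le_rfl)

theorem Real.prod_rpow_le_prod_rpow_of_sum_range_le {n : ℕ} {a u v : ℕ → ℝ}
    (ha : ∀ i, i + 1 < n → a (i + 1) ≤ a i) (ha1 : ∀ i < n, 1 ≤ a i)
    (huv : ∀ s ≤ n, ∑ i ∈ range s, u i ≤ ∑ i ∈ range s, v i) :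
    ∏ i ∈ range n, a i ^ u i ≤ ∏ i ∈ range n, a i ^ v i := by
  have hpos : ∀ i ∈ range n, 0 < a i := fun i hi => one_pos.trans_le (ha1 i (mem_range.mp hi))
  have hlog : ∀ w : ℕ → ℝ, Real.log (∏ i ∈ range n, a i ^ w i)
      = ∑ i ∈ range n, w i * Real.log (a i) := fun w => by
    rw [Real.log_prod fun i hi => (Real.rpow_pos_of_pos (hpos i hi) _).ne']
    exact sum_congr rfl fun i hi => Real.log_rpow (hpos i hi) _
  rw [← Real.log_le_log_iff (prod_pos fun i hi => Real.rpow_pos_of_pos (hpos i hi) _)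
    (prod_pos fun i hi => Real.rpow_pos_of_pos (hpos i hi) _), hlog, hlog]
  exact sum_mul_le_sum_mul_of_sum_range_le
    (fun i hi => Real.log_le_log (one_pos.trans_le (ha1 _ hi)) (ha i hi))
    (fun i hi => Real.log_nonneg (ha1 i hi)) huv

theorem sum_range_sub_le_of_isGreatest {n : ℕ} {t : ℕ → ℤ} {δ : ℝ}
    (hδ : IsGreatest {x : ℝ | ∃ s : ℕ, 1 ≤ s ∧ s ≤ n ∧ x = ((t s : ℝ) - (t 0 : ℝ)) / s} δ)
    {s : ℕ} (hs : s ≤ n) :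
    ∑ i ∈ range s, (((t (i + 1) - t i : ℤ)) : ℝ) ≤ ∑ _ ∈ range s, δ := by
  rcases Nat.eq_zero_or_pos s with rfl | hs1
  · simp
  have hsr : (0 : ℝ) < s := by exact_mod_cast hs1
  have hmem := hδ.2 ⟨s, hs1, hs, rfl⟩
  rw [div_le_iff₀ hsr] at hmem
  push_cast
  rw [sum_range_sub (fun i => (t i : ℝ)), sum_const, card_range, nsmul_eq_mul, mul_comm]
  exact hmem

theorem stmt_0_general (n : ℕ) (t : ℕ → ℤ) (δ : ℝ)
    (hδ : IsGreatest {x : ℝ | ∃ s : ℕ, 1 ≤ s ∧ s ≤ n ∧ x = ((t s : ℝ) - (t 0 : ℝ)) / s} δ)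
    (a : ℕ → ℝ) (hdec : ∀ i, i + 1 < n → a (i + 1) ≤ a i) (ha1 : ∀ i < n, 1 ≤ a i) :
    ∏ i ∈ Finset.range n, a i ^ (t (i + 1) - t i) ≤
      (∏ i ∈ Finset.range n, a i) ^ δ := by
  calc ∏ i ∈ range n, a i ^ (t (i + 1) - t i)
      = ∏ i ∈ range n, a i ^ (((t (i + 1) - t i : ℤ)) : ℝ) := by simp only [Real.rpow_intCast]
    _ ≤ ∏ i ∈ range n, a i ^ δ := Real.prod_rpow_le_prod_rpow_of_sum_range_le hdec ha1
        fun _ hs => sum_range_sub_le_of_isGreatest hδ hs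
    _ = (∏ i ∈ range n, a i) ^ δ :=
        Real.finsetProd_rpow _ _ (fun i hi => zero_le_one.trans (ha1 i (mem_range.mp hi))) δ

theorem stmt_0 (n : ℕ) (hn : 1 ≤ n) (t : ℕ → ℤ) (ht0 : t 0 = 1)
    (hmono : ∀ i < n, t i < t (i + 1)) (δ : ℝ)
    (hδ : IsGreatest {x : ℝ | ∃ s : ℕ, 1 ≤ s ∧ s ≤ n ∧ x = ((t s : ℝ) - (t 0 : ℝ)) / s} δ)
    (a : ℕ → ℝ) (hdec : ∀ i, i + 1 < n → a (i + 1) ≤ a i) (ha1 : ∀ i < n, 1 ≤ a i) :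
    ∏ i ∈ Finset.range n, a i ^ (t (i + 1) - t i) ≤
      (∏ i ∈ Finset.range n, a i) ^ δ :=
  stmt_0_general n t δ hδ a hdec ha1
end

section
/- Let θ be a real number with 0 < θ ≤ 1/2 and let q be a positive integer. Then there exists a finite set W of cardinality at most (e/θ)^{q−1}, consisting of tuples (c_1, …, c_q) of nonnegative real numbers with c_1 + ⋯ + c_q = 1, with the following property: for every choice of real numbers A_1, …, A_q and Λ with A_j ≤ 0 for j = 1, …, q and A_1 + ⋯ + A_q ≤ −Λ, there exists a tuple (c_1, …, c_q) ∈ W such that A_j ≤ −c_j (1 − θ) Λ for all j = 1, …, q. -/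
/-!
Take for `W` the grid of points `k / M` of the simplex, `k ∈ ℕ^q` with `∑ k = M`, where `M` is
the least integer with `(q - 1)(1 - θ) < Mθ`. Given `A` and `Λ > 0`, put `a = -A / Λ`, so that
`∑ a ≥ 1`; rounding `M a_j / (1 - θ)` down still leaves a total of at least `M`, and lowering
these integers to total exactly `M` gives a grid point `c` with `c_j (1 - θ) ≤ a_j`.
The grid has at most `C(q - 1 + M, q - 1)` points, and since `(q - 1 + M) θ ≤ q`, the bound
`C(n, k) ≤ n^k / k!` together with `(k + 1)^k ≤ k! e^k` (a product of factors
`(1 + 1/m)^m ≤ e`) gives at most `(e / θ)^(q - 1)`.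
-/

open Finset Real
open scoped Nat

theorem add_one_pow_le_factorial_mul_exp_one_pow (k : ℕ) :
    ((k : ℝ) + 1) ^ k ≤ k ! * exp 1 ^ k := by
  induction k with
  | zero => simp
  | succ k ih =>
    have h_ratio : ((k : ℝ) + 1 + 1) ^ (k + 1) ≤ ((k : ℝ) + 1) ^ (k + 1) * exp 1 := by
      calc ((k : ℝ) + 1 + 1) ^ (k + 1)
          = ((k : ℝ) + 1) ^ (k + 1) * (1 + ((k : ℝ) + 1)⁻¹) ^ (k + 1) := by
            rw [← mul_pow]; congr 1; field_simp
        _ ≤ ((k : ℝ) + 1) ^ (k + 1) * exp 1 := by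
            gcongr; exact_mod_cast one_add_inv_pow_le_exp (n := k + 1)
    calc ((↑(k + 1) : ℝ) + 1) ^ (k + 1) ≤ ((k : ℝ) + 1) * ((k : ℝ) + 1) ^ k * exp 1 := by
          push_cast; convert h_ratio using 2; ring
      _ ≤ ((k : ℝ) + 1) * (k ! * exp 1 ^ k) * exp 1 := by gcongr
      _ = ↑(k + 1)! * exp 1 ^ (k + 1) := by push_cast [Nat.factorial_succ]; ring

theorem Nat.choose_le_exp_one_div_pow {θ : ℝ} (hθ : 0 < θ) {n k : ℕ}
    (hn : n * θ ≤ k + 1) : (n.choose k : ℝ) ≤ (exp 1 / θ) ^ k := by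
  have hfac : (0 : ℝ) < k ! := by positivity
  rw [div_pow, le_div_iff₀ (by positivity)]
  calc (n.choose k : ℝ) * θ ^ k ≤ (n : ℝ) ^ k / k ! * θ ^ k := by
        gcongr; exact Nat.choose_le_pow_div k n
    _ = (n * θ) ^ k / k ! := by ring
    _ ≤ ((k : ℝ) + 1) ^ k / k ! := by gcongr
    _ ≤ exp 1 ^ k := by
        rw [div_le_iff₀ hfac, mul_comm]; exact add_one_pow_le_factorial_mul_exp_one_pow k

theorem exists_nat_ne_zero_lt_mul_and_add_mul_le {θ : ℝ} (hθ0 : 0 < θ) (hθ1 : θ ≤ 1)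
    (p : ℕ) : ∃ M : ℕ, M ≠ 0 ∧ p * (1 - θ) < M * θ ∧ (p + M) * θ ≤ p + 1 := by
  set x := p * (1 - θ) / θ
  have hx : 0 ≤ x := div_nonneg (mul_nonneg p.cast_nonneg (by linarith)) hθ0.le
  refine ⟨⌊x⌋₊ + 1, Nat.succ_ne_zero _, ?_, ?_⟩
  · rw [← div_lt_iff₀ hθ0]; exact_mod_cast Nat.lt_floor_add_one x
  · have hM : ((⌊x⌋₊ + 1 : ℕ) : ℝ) * θ ≤ p * (1 - θ) + θ := by
      have := Nat.floor_le hx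
      push_cast
      calc ((⌊x⌋₊ : ℝ) + 1) * θ ≤ (x + 1) * θ := by gcongr
        _ = p * (1 - θ) + θ := by simp only [x]; field_simp
    nlinarith

theorem le_sum_floor_mul_div {ι : Type*} [Fintype ι] {M : ℕ} {θ : ℝ} (hθ : θ < 1)
    (hM : ((Fintype.card ι : ℝ) - 1) * (1 - θ) < M * θ) {a : ι → ℝ}
    (ha : 1 ≤ ∑ i, a i) : M ≤ ∑ i, ⌊M * a i / (1 - θ)⌋₊ := by
  have hθ' : 0 < 1 - θ := sub_pos.mpr hθ
  -- Rounding down loses less than one per coordinate; `hM` is exactly what absorbs that loss.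
  have h_lt : (M : ℝ) + Fintype.card ι - 1 < M / (1 - θ) := by
    rw [lt_div_iff₀ hθ']; linarith
  have h_le : (M : ℝ) / (1 - θ) ≤ ∑ i, ((⌊M * a i / (1 - θ)⌋₊ : ℝ) + 1) :=
    calc (M : ℝ) / (1 - θ) ≤ M * (∑ i, a i) / (1 - θ) := by
          gcongr; exact le_mul_of_one_le_right M.cast_nonneg ha
      _ = ∑ i, M * a i / (1 - θ) := by rw [mul_sum, sum_div]
      _ ≤ _ := sum_le_sum fun i _ ↦ (Nat.lt_floor_add_one _).le
  rw [sum_add_distrib, sum_const, card_univ, nsmul_one] at h_le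
  have : (M : ℝ) < ∑ i, (⌊M * a i / (1 - θ)⌋₊ : ℝ) + 1 := by linarith
  exact_mod_cast Nat.lt_add_one_iff.mp (by exact_mod_cast this)

noncomputable def simplexGrid (ι : Type*) [Fintype ι] [DecidableEq ι] (M : ℕ) :
    Finset (ι → ℝ) :=
  univ.image fun s : Sym ι M ↦ fun i ↦ ((s : Multiset ι).count i : ℝ) / M

section simplexGrid

variable {ι : Type*} [Fintype ι] [DecidableEq ι] {M : ℕ} {c : ι → ℝ}

theorem card_simplexGrid_le : #(simplexGrid ι M) ≤ (Fintype.card ι + M - 1).choose M :=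
  (card_image_le).trans (by rw [card_univ, Sym.card_sym_eq_choose])

theorem nonneg_of_mem_simplexGrid (hc : c ∈ simplexGrid ι M) (i : ι) : 0 ≤ c i := by
  obtain ⟨s, -, rfl⟩ := mem_image.mp hc
  positivity

theorem sum_eq_one_of_mem_simplexGrid (hM : M ≠ 0) (hc : c ∈ simplexGrid ι M) :
    ∑ i, c i = 1 := by
  obtain ⟨s, -, rfl⟩ := mem_image.mp hc
  rw [← sum_div, div_eq_one_iff_eq (by exact_mod_cast hM)]
  exact_mod_cast (Multiset.sum_count_eq_card fun i _ ↦ mem_univ i).trans s.card_coe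

theorem simplexGrid_nonempty [Nonempty ι] : (simplexGrid ι M).Nonempty :=
  (univ_nonempty_iff.mpr ⟨Sym.replicate M (Classical.arbitrary ι)⟩).image _

theorem Sym.exists_count_le {t : ι → ℕ} (ht : M ≤ ∑ i, t i) :
    ∃ s : Sym ι M, ∀ i, (s : Multiset ι).count i ≤ t i := by
  set m : Multiset ι := ∑ i, t i • {i}
  have hm : Multiset.card m = ∑ i, t i := by simp [m]
  obtain ⟨s, hs⟩ : ∃ s, s ∈ Multiset.powersetCard M m := by
    rw [← Multiset.card_pos_iff_exists_mem, Multiset.card_powersetCard, hm]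
    exact Nat.choose_pos ht
  obtain ⟨hsm, hcard⟩ := Multiset.mem_powersetCard.mp hs
  refine ⟨⟨s, hcard⟩, fun i ↦ ?_⟩
  calc s.count i ≤ m.count i := Multiset.count_le_of_le i hsm
    _ = t i := by simp [m, Multiset.count_sum', Multiset.count_singleton]

theorem exists_mem_simplexGrid_mul_le {θ : ℝ} (hθ : θ < 1)
    (hM : ((Fintype.card ι : ℝ) - 1) * (1 - θ) < M * θ) {a : ι → ℝ}
    (ha₀ : ∀ i, 0 ≤ a i) (ha : 1 ≤ ∑ i, a i) :
    ∃ c ∈ simplexGrid ι M, ∀ i, c i * (1 - θ) ≤ a i := by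
  have hθ' : 0 < 1 - θ := sub_pos.mpr hθ
  obtain ⟨s, hs⟩ := Sym.exists_count_le (le_sum_floor_mul_div hθ hM ha)
  refine ⟨_, mem_image_of_mem _ (mem_univ s), fun i ↦ ?_⟩
  have hcount : ((s : Multiset ι).count i : ℝ) * (1 - θ) ≤ a i * M := by
    rw [← le_div_iff₀ hθ', mul_comm]
    exact (Nat.cast_le.mpr (hs i)).trans (Nat.floor_le (by have := ha₀ i; positivity))
  rw [div_mul_eq_mul_div]
  exact div_le_of_le_mul₀ M.cast_nonneg (ha₀ i) hcount

theorem exists_mem_simplexGrid_le_neg_mul [Nonempty ι] {θ : ℝ} (hθ : θ < 1)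
    (hM : ((Fintype.card ι : ℝ) - 1) * (1 - θ) < M * θ) {A : ι → ℝ} {Λ : ℝ}
    (hA : ∀ i, A i ≤ 0) (hsum : ∑ i, A i ≤ -Λ) :
    ∃ c ∈ simplexGrid ι M, ∀ i, A i ≤ -c i * (1 - θ) * Λ := by
  rcases le_or_gt Λ 0 with hΛ | hΛ
  · obtain ⟨c, hc⟩ := simplexGrid_nonempty (ι := ι) (M := M)
    refine ⟨c, hc, fun i ↦ (hA i).trans ?_⟩
    have := mul_nonneg (mul_nonneg (nonneg_of_mem_simplexGrid hc i) (sub_nonneg.mpr hθ.le))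
      (neg_nonneg.mpr hΛ)
    linarith
  · obtain ⟨c, hc, hle⟩ := exists_mem_simplexGrid_mul_le hθ hM (a := fun i ↦ -A i / Λ)
      (fun i ↦ div_nonneg (neg_nonneg.mpr (hA i)) hΛ.le)
      (by rw [← sum_div, le_div_iff₀ hΛ, sum_neg_distrib]; linarith)
    refine ⟨c, hc, fun i ↦ ?_⟩
    have := (le_div_iff₀ hΛ).mp (hle i)
    linarith

end simplexGrid

theorem stmt_1 (θ : ℝ) (hθ0 : 0 < θ) (hθ : θ ≤ 1 / 2) (q : ℕ) (hq : 1 ≤ q) :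
    ∃ W : Finset (Fin q → ℝ),
      (W.card : ℝ) ≤ (Real.exp 1 / θ) ^ (q - 1) ∧
      (∀ c ∈ W, (∀ j, 0 ≤ c j) ∧ ∑ j, c j = 1) ∧
      (∀ (A : Fin q → ℝ) (Λ : ℝ), (∀ j, A j ≤ 0) → ∑ j, A j ≤ -Λ →
        ∃ c ∈ W, ∀ j, A j ≤ -(c j) * (1 - θ) * Λ) := by
  obtain ⟨p, rfl⟩ := Nat.exists_eq_add_of_le' hq
  obtain ⟨M, hM, hM_cover, hM_card⟩ :=
    exists_nat_ne_zero_lt_mul_and_add_mul_le hθ0 (by linarith) p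
  have hM_cover' : ((Fintype.card (Fin (p + 1)) : ℝ) - 1) * (1 - θ) < M * θ := by
    simpa using hM_cover
  refine ⟨simplexGrid (Fin (p + 1)) M, ?_, fun c hc ↦
    ⟨nonneg_of_mem_simplexGrid hc, sum_eq_one_of_mem_simplexGrid hM hc⟩,
    fun A Λ hA hsum ↦ exists_mem_simplexGrid_le_neg_mul (by linarith) hM_cover' hA hsum⟩
  calc (#(simplexGrid (Fin (p + 1)) M) : ℝ) ≤ ((p + M).choose p : ℕ) := by
        rw [Nat.choose_symm_add]
        exact_mod_cast card_simplexGrid_le.trans_eq (by simp)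
    _ ≤ (exp 1 / θ) ^ (p + 1 - 1) := by
        simpa using Nat.choose_le_exp_one_div_pow hθ0 (by exact_mod_cast hM_card)
end

section
/- Let n ≥ 1, m ≥ n be integers, l an integer with n ≤ l ≤ m, and δ, δ′ real numbers with 0 < δ′ ≤ min(δ, l − n + 1). Then for all real numbers c_0 ≥ c_1 ≥ ⋯ ≥ c_m ≥ 0, one has (1/δ′)(c_0 + ⋯ + c_l) ≥ ((n + δ)/((m+1)δ)) (c_0 + ⋯ + c_m). -/
open Finset

/-- Chebyshev's sum inequality for `f` and the indicator of `s`, which is antitone too. -/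
theorem Antitone.sum_mul_card_le_card_mul_sum_of_isLowerSet {ι α : Type*} [Fintype ι]
    [LinearOrder ι] [Semiring α] [LinearOrder α] [IsStrictOrderedRing α] [ExistsAddOfLE α]
    {f : ι → α} (hf : Antitone f) {s : Finset ι} (hs : IsLowerSet (s : Set ι)) :
    (∑ i, f i) * #s ≤ Fintype.card ι * ∑ i ∈ s, f i := by
  have hind : Antitone fun i => if i ∈ s then (1 : α) else 0 := by
    intro i j hij
    by_cases hj : j ∈ s
    · have hi : i ∈ s := hs hij hj
      simp [hi, hj]
    · simp only [hj, if_false]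
      split_ifs <;> simp
  simpa [sum_ite_mem] using (hf.monovary hind).sum_mul_sum_le_card_mul_sum

theorem stmt_6_general (n m l : ℕ) (hlm : l ≤ m)
    (δ δ' : ℝ) (h0 : 0 < δ') (hδ : δ' ≤ δ) (hδ' : δ' ≤ (l : ℝ) - n + 1)
    (c : Fin (m + 1) → ℝ) (hdec : ∀ i j : Fin (m + 1), i ≤ j → c j ≤ c i)
    (hnn : ∀ i, 0 ≤ c i) :
    ((n + δ) / ((m + 1) * δ)) * ∑ i, c i ≤
      (1 / δ') * ∑ i ∈ Finset.univ.filter (fun i : Fin (m + 1) => (i : ℕ) ≤ l), c i := by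
  set S := ∑ i, c i
  set T := ∑ i ∈ Finset.univ.filter (fun i : Fin (m + 1) => (i : ℕ) ≤ l), c i
  have hS : 0 ≤ S := sum_nonneg fun i _ => hnn i
  have hδpos : 0 < δ := h0.trans_le hδ
  have hprefix : Finset.univ.filter (fun i : Fin (m + 1) => (i : ℕ) ≤ l) =
      Iic (⟨l, by omega⟩ : Fin (m + 1)) := by
    ext i
    simp [Fin.le_def]
  have hchebyshev : S * (l + 1) ≤ (m + 1) * T := by
    have := Antitone.sum_mul_card_le_card_mul_sum_of_isLowerSet (fun i j h => hdec i j h)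
      (s := Iic (⟨l, by omega⟩ : Fin (m + 1))) (by rw [coe_Iic]; exact isLowerSet_Iic _)
    simpa [T, hprefix, Fin.card_Iic] using this
  have hratio : (n + δ) / δ ≤ (l + 1) / δ' :=
    calc (n + δ) / δ = n / δ + 1 := by field_simp
      _ ≤ n / δ' + 1 := by gcongr
      _ = (n + δ') / δ' := by field_simp
      _ ≤ (l + 1) / δ' := div_le_div_of_nonneg_right (by linarith) h0.le
  calc (n + δ) / ((m + 1) * δ) * S = (n + δ) / δ * (S / (m + 1)) := by field_simp
    _ ≤ (l + 1) / δ' * (S / (m + 1)) := by gcongr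
    _ = S * (l + 1) / (m + 1) / δ' := by ring
    _ ≤ (m + 1) * T / (m + 1) / δ' := by gcongr
    _ = 1 / δ' * T := by field_simp

theorem stmt_6 (n m l : ℕ) (hn : 1 ≤ n) (hnm : n ≤ m) (hnl : n ≤ l) (hlm : l ≤ m)
    (δ δ' : ℝ) (h0 : 0 < δ') (hδ : δ' ≤ δ) (hδ' : δ' ≤ (l : ℝ) - n + 1)
    (c : Fin (m + 1) → ℝ) (hdec : ∀ i j : Fin (m + 1), i ≤ j → c j ≤ c i)
    (hnn : ∀ i, 0 ≤ c i) :
    ((n + δ) / ((m + 1) * δ)) * ∑ i, c i ≤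
      (1 / δ') * ∑ i ∈ Finset.univ.filter (fun i : Fin (m + 1) => (i : ℕ) ≤ l), c i :=
  stmt_6_general n m l hlm δ δ' h0 hδ hδ' c hdec hnn
end

section
/- Let X be an irreducible subvariety of dimension n ≥ 1 of a projective variety V, and let D_1, …, D_q be divisors on V, none containing X, which are in m-subgeneral position with respect to X (i.e., for every subset J ⊆ {1,…,q} with #J ≤ m+1, dim(X ∩ ⋂_{j∈J} D_j) ≤ m − #J, and any m+1 of them have empty intersection with X). Then the distributive constant δ_{D,X} = max_{∅ ≠ J ⊆ {1,…,q}} #J / (n − dim(X ∩ ⋂_{j∈J} D_j)) satisfies δ_{D,X} ≤ m − n + 1. -/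
open Finset

/-! A ratio with `d = dim (X ∩ ⋂_{j ∈ J} D_j) ∈ ℕ` has a nonempty intersection, so `#J ≤ m` and
subgeneral position gives `#J ≤ m - d`. When `n - d ≥ 1` this bounds `#J / (n - d)` by `m - n + 1`,
because `(m - n + 1)(n - d) - (m - d) = (m - n)(n - d - 1) ≥ 0`; otherwise the ratio is `≤ 0`. -/

theorem nonempty_of_topologicalKrullDim_ne_bot {T : Type*} [TopologicalSpace T]
    (h : topologicalKrullDim T ≠ ⊥) : Nonempty T := by
  by_contra hT
  rw [not_nonempty_iff] at hT
  have : IsEmpty (TopologicalSpace.IrreducibleCloseds T) :=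
    ⟨fun Z => hT.false Z.isIrreducible.nonempty.some⟩
  exact h Order.krullDim_eq_bot

theorem card_le_of_inter_biInter_nonempty {α ι : Type*} {X : Set α} {s : ι → Set α} {m : ℕ}
    (hempty : ∀ J : Finset ι, #J = m + 1 → X ∩ ⋂ j ∈ J, s j = ∅) {J : Finset ι}
    (hJ : (X ∩ ⋂ j ∈ J, s j).Nonempty) : #J ≤ m := by
  by_contra! hcard
  obtain ⟨J', hJ'J, hJ'card⟩ := exists_subset_card_eq hcard
  obtain ⟨x, hxX, hxs⟩ := hJ
  have hx : x ∈ X ∩ ⋂ j ∈ J', s j :=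
    ⟨hxX, Set.biInter_subset_biInter_left (fun _ hj => hJ'J hj) hxs⟩
  simp [hempty J' hJ'card] at hx

theorem div_sub_le_sub_add_one {k d n m : ℕ} (hnm : n ≤ m) (hkd : k + d ≤ m) :
    (k : ℝ) / ((n : ℝ) - d) ≤ m - n + 1 := by
  have hnm' : (n : ℝ) ≤ m := by exact_mod_cast hnm
  rcases lt_or_ge d n with hdn | hnd
  · have hdn' : (d : ℝ) + 1 ≤ n := by exact_mod_cast hdn
    have hkd' : (k : ℝ) + d ≤ m := by exact_mod_cast hkd
    rw [div_le_iff₀ (by linarith)]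
    nlinarith
  · have hnd' : (n : ℝ) ≤ d := by exact_mod_cast hnd
    calc (k : ℝ) / ((n : ℝ) - d) ≤ 0 := div_nonpos_of_nonneg_of_nonpos k.cast_nonneg (by linarith)
      _ ≤ m - n + 1 := by linarith

theorem stmt_10_general (V : Type*) [TopologicalSpace V] (q n m : ℕ) (hnm : n ≤ m)
    (X : Set V) (D : Fin q → Set V)
    -- m-subgeneral position with respect to X:
    (hsub : ∀ J : Finset (Fin q), J.Nonempty → J.card ≤ m + 1 →
      ∀ d : ℕ, topologicalKrullDim ↥(X ∩ ⋂ j ∈ J, D j) = ((d : ℕ∞) : WithBot ℕ∞) →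
        (d : ℤ) ≤ (m : ℤ) - J.card)
    (hempty : ∀ J : Finset (Fin q), J.card = m + 1 → X ∩ ⋂ j ∈ J, D j = ∅) :
    -- the distributive constant is at most m - n + 1 : every ratio is ≤ m - n + 1
    ∀ J : Finset (Fin q), J.Nonempty →
      ∀ d : ℕ, topologicalKrullDim ↥(X ∩ ⋂ j ∈ J, D j) = ((d : ℕ∞) : WithBot ℕ∞) →
        (J.card : ℝ) / ((n : ℝ) - d) ≤ (m : ℝ) - n + 1 := by
  intro J hJ d hd
  have hne : (X ∩ ⋂ j ∈ J, D j).Nonempty :=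
    Set.nonempty_coe_sort.mp (nonempty_of_topologicalKrullDim_ne_bot (hd ▸ WithBot.coe_ne_bot))
  have hcard : #J ≤ m := card_le_of_inter_biInter_nonempty hempty hne
  have hdim := hsub J hJ (by omega) d hd
  exact div_sub_le_sub_add_one hnm (by omega)

theorem stmt_10 (V : Type*) [TopologicalSpace V] (q n m : ℕ) (hn : 1 ≤ n) (hnm : n ≤ m)
    (X : Set V) (hXcl : IsClosed X) (hXirr : IsIrreducible X)
    (hXdim : topologicalKrullDim X = ((n : ℕ∞) : WithBot ℕ∞))
    (D : Fin q → Set V) (hDcl : ∀ j, IsClosed (D j)) (hXD : ∀ j, ¬ X ⊆ D j)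
    -- m-subgeneral position with respect to X:
    (hsub : ∀ J : Finset (Fin q), J.Nonempty → J.card ≤ m + 1 →
      ∀ d : ℕ, topologicalKrullDim ↥(X ∩ ⋂ j ∈ J, D j) = ((d : ℕ∞) : WithBot ℕ∞) →
        (d : ℤ) ≤ (m : ℤ) - J.card)
    (hempty : ∀ J : Finset (Fin q), J.card = m + 1 → X ∩ ⋂ j ∈ J, D j = ∅) :
    -- the distributive constant is at most m - n + 1 : every ratio is ≤ m - n + 1
    ∀ J : Finset (Fin q), J.Nonempty →
      ∀ d : ℕ, topologicalKrullDim ↥(X ∩ ⋂ j ∈ J, D j) = ((d : ℕ∞) : WithBot ℕ∞) →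
        (J.card : ℝ) / ((n : ℝ) - d) ≤ (m : ℝ) - n + 1 :=
  stmt_10_general V q n m hnm X D hsub hempty
end

section
/- Let n ≥ 1, l ≥ n be integers and suppose 0 = t_0 < t_1 < ⋯ < t_n = l are integers such that δ ≥ t_u/u for all u = 1, …, n, where δ > 0 is real. Then for real numbers λ_0 ≥ λ_1 ≥ ⋯ ≥ λ_l ≥ 0, one has λ_{t_0} · (t_1 − t_0) + λ_{t_1} · (t_2 − t_1) + ⋯ + λ_{t_{n−1}} · (t_n − t_{n−1}) ≤ δ · (λ_{t_0} + λ_{t_1} + ⋯ + λ_{t_{n−1}}). -/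
/-!
By summation by parts, a sum `∑ a_s b_s` against nonincreasing nonnegative weights `b_s` is
dominated by `∑ c_s b_s` as soon as every partial sum of `a` is dominated by that of `c`. With
`a_s = t_{s+1} - t_s` and `c_s = δ` the partial sums are `t_k` and `δ k`, and `b_s = λ_{t_s}`.
-/

open Finset

theorem sum_mul_nonneg_of_partial_sums_nonneg {R : Type*} [CommRing R] [PartialOrder R]
    [IsOrderedRing R] {d b : ℕ → R} {n : ℕ}
    (hd : ∀ k ≤ n, 0 ≤ ∑ i ∈ range k, d i)
    (hb : ∀ i j, i ≤ j → j < n → b j ≤ b i) (hb0 : ∀ i < n, 0 ≤ b i) :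
    0 ≤ ∑ i ∈ range n, b i * d i := by
  rcases Nat.eq_zero_or_pos n with rfl | hn
  · simp
  simp only [← smul_eq_mul, sum_range_by_parts b d n]
  have hlast : 0 ≤ b (n - 1) • ∑ j ∈ range n, d j :=
    smul_nonneg (hb0 _ (by omega)) (hd n le_rfl)
  have hsteps : ∑ i ∈ range (n - 1), (b (i + 1) - b i) • ∑ j ∈ range (i + 1), d j ≤ 0 :=
    sum_nonpos fun i hi => by
      have hi : i + 1 < n := by have := mem_range.1 hi; omega
      exact smul_nonpos_of_nonpos_of_nonneg (sub_nonpos.2 (hb i (i + 1) (by omega) hi))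
        (hd _ hi.le)
  exact sub_nonneg.2 (hsteps.trans hlast)

theorem sum_mul_le_sum_mul_of_partial_sums_le {R : Type*} [CommRing R] [PartialOrder R]
    [IsOrderedRing R] {a c b : ℕ → R} {n : ℕ}
    (hac : ∀ k ≤ n, ∑ i ∈ range k, a i ≤ ∑ i ∈ range k, c i)
    (hb : ∀ i j, i ≤ j → j < n → b j ≤ b i) (hb0 : ∀ i < n, 0 ≤ b i) :
    ∑ i ∈ range n, a i * b i ≤ ∑ i ∈ range n, c i * b i := by
  have := sum_mul_nonneg_of_partial_sums_nonneg (d := fun i => c i - a i)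
    (fun k hk => by simpa only [sum_sub_distrib, sub_nonneg] using hac k hk) hb hb0
  simpa only [mul_sub, sum_sub_distrib, sub_nonneg, mul_comm] using this

theorem stmt_13_general (n l : ℕ) (t : ℕ → ℕ)
    (ht0 : t 0 = 0) (htn : t n = l) (hmono : ∀ u < n, t u < t (u + 1))
    (δ : ℝ) (hδ : ∀ u, 1 ≤ u → u ≤ n → (t u : ℝ) / u ≤ δ)
    (lam : ℕ → ℝ) (hdec : ∀ i j, i ≤ j → j ≤ l → lam j ≤ lam i)
    (hnn : ∀ i, i ≤ l → 0 ≤ lam i) :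
    ∑ s ∈ Finset.range n, ((t (s + 1) : ℝ) - t s) * lam (t s) ≤
      δ * ∑ s ∈ Finset.range n, lam (t s) := by
  have ht_mono : StrictMonoOn t (Set.Iic n) :=
    strictMonoOn_Iic_of_lt_succ fun m hm => by simpa using hmono m hm
  have ht_le : ∀ s ≤ n, t s ≤ l := fun s hs =>
    htn ▸ ht_mono.monotoneOn (Set.mem_Iic.2 hs) (Set.mem_Iic.2 le_rfl) hs
  have hpartial : ∀ k ≤ n, ∑ s ∈ range k, ((t (s + 1) : ℝ) - t s) ≤ ∑ _s ∈ range k, δ := by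
    intro k hk
    rw [sum_range_sub (fun s => (t s : ℝ)), ht0, sum_const, card_range, nsmul_eq_mul,
      Nat.cast_zero, sub_zero]
    rcases Nat.eq_zero_or_pos k with rfl | hk0
    · simp [ht0]
    · exact (div_le_iff₀ (by positivity)).1 (hδ k hk0 hk) |>.trans_eq (mul_comm _ _)
  have hlam_anti : ∀ i j, i ≤ j → j < n → lam (t j) ≤ lam (t i) := fun i j hij hj =>
    hdec _ _ (ht_mono.monotoneOn (Set.mem_Iic.2 (by omega)) (Set.mem_Iic.2 hj.le) hij)
      (ht_le j hj.le)
  rw [mul_sum]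
  exact sum_mul_le_sum_mul_of_partial_sums_le hpartial hlam_anti
    (fun i hi => hnn _ (ht_le i hi.le))

theorem stmt_13 (n l : ℕ) (hn : 1 ≤ n) (hln : n ≤ l) (t : ℕ → ℕ)
    (ht0 : t 0 = 0) (htn : t n = l) (hmono : ∀ u < n, t u < t (u + 1))
    (δ : ℝ) (hδ0 : 0 < δ) (hδ : ∀ u, 1 ≤ u → u ≤ n → (t u : ℝ) / u ≤ δ)
    (lam : ℕ → ℝ) (hdec : ∀ i j, i ≤ j → j ≤ l → lam j ≤ lam i)
    (hnn : ∀ i, i ≤ l → 0 ≤ lam i) :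
    ∑ s ∈ Finset.range n, ((t (s + 1) : ℝ) - t s) * lam (t s) ≤
      δ * ∑ s ∈ Finset.range n, lam (t s) :=
  stmt_13_general n l t ht0 htn hmono δ hδ lam hdec hnn
end
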